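/- arXiv:1702.08683 — 2 statements merged into one kernel-verified Lean document; each statement's English description precedes it below -/
import Mathlib

section
/- Let F and G be admissible G-functions on ℝ^N with F ≺≺ G, i.e. for every α > 0, G(αx)/F(x) → ∞ as |x| → ∞, and let I ⊂ ℝ be a bounded nondegenerate interval. If (u_n) ⊂ L^G(I,ℝ^N) is bounded in the Luxemburg norm ‖·‖_G (there is C > 0 with ‖u_n‖_G ≤ C for all n) and (u_n) is Cauchy in measure on I, then (u_n) is a Cauchy sequence for the norm ‖·‖_F, and hence converges in L^F(I,ℝ^N). -/
open MeasureTheory Filter Set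

noncomputable section

abbrev Euc (N : ℕ) := EuclideanSpace ℝ (Fin N)

/-- Admissible G-function: (G1)-(G6). -/
def IsGFunction {N : ℕ} (G : Euc N → ℝ) : Prop :=
  G 0 = 0 ∧
  ConvexOn ℝ Set.univ G ∧
  (∀ x, G (-x) = G x) ∧
  (∀ C : ℝ, ∃ R : ℝ, ∀ x : Euc N, R ≤ ‖x‖ → C * ‖x‖ ≤ G x) ∧
  (∃ K₁ : ℝ, 2 ≤ K₁ ∧ ∃ M₁ : ℝ, 0 < M₁ ∧ ∀ x : Euc N, M₁ ≤ ‖x‖ → G ((2:ℝ) • x) ≤ K₁ * G x) ∧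
  (∃ K₂ : ℝ, 1 ≤ K₂ ∧ ∃ M₂ : ℝ, 0 < M₂ ∧ ∀ x : Euc N, M₂ ≤ ‖x‖ → G x ≤ (1/(2*K₂)) * G (K₂ • x))

/-- Membership in the anisotropic Orlicz space L^G(I, ℝ^N). -/
def MemLG {N : ℕ} (G : Euc N → ℝ) (I : Set ℝ) (u : ℝ → Euc N) : Prop :=
  AEStronglyMeasurable u (volume.restrict I) ∧ IntegrableOn (fun t => G (u t)) I

/-- Luxemburg norm. -/
def luxNorm {N : ℕ} (G : Euc N → ℝ) (I : Set ℝ) (u : ℝ → Euc N) : ℝ :=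
  sInf {α : ℝ | 0 < α ∧ (∫ t in I, G (α⁻¹ • u t)) ≤ 1}

/-- Modular. -/
def modular {N : ℕ} (G : Euc N → ℝ) (I : Set ℝ) (u : ℝ → Euc N) : ℝ :=
  ∫ t in I, G (u t)

/-- Fenchel conjugate. -/
def fenchelConj {N : ℕ} (G : Euc N → ℝ) (y : Euc N) : ℝ :=
  ⨆ x : Euc N, ((inner ℝ x y : ℝ) - G x)


/-!
Put `v = ε⁻¹ • (uₙ - uₘ)` and let `D` exceed the bound on `‖uₙ‖_G`, so that the `G`-modulars of
the `D⁻¹ • uₙ` are at most `1`. As `F ≺≺ G`, `F v ≤ G (ε/(2D) • v) / 3 + B` for a constant `B`,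
and `ε/(2D) • v` is the midpoint of `D⁻¹ • uₙ` and `-D⁻¹ • uₘ`, so by convexity its `G`-modular is
at most `1`. Where `v` is small, `F v` is uniformly small; the set where it is not, on which the
constant `B` is paid, has small measure for large `n, m` because `(uₙ)` is Cauchy in measure. Hence
`∫ F v ≤ 1/3 + 1/3 + 1/3`, i.e. `‖uₙ - uₘ‖_F ≤ ε`. Since `F` is supercoercive, `(uₙ)` is then
Cauchy in `L¹`; a subsequence converges a.e. to the `L¹` limit `w`, and Fatou's lemma passes the
modular bounds on to `uₙ - w`.
-/

open scoped Topology

def EssentiallySlower {N : ℕ} (F G : Euc N → ℝ) : Prop :=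
  ∀ α : ℝ, 0 < α → ∀ C : ℝ, ∃ R : ℝ, ∀ x : Euc N, R ≤ ‖x‖ → C * F x ≤ G (α • x)

infix:50 " ≺≺ " => EssentiallySlower

namespace IsGFunction

variable {N : ℕ} {G : Euc N → ℝ}

theorem half_sub_le (hG : IsGFunction G) (x y : Euc N) :
    G ((1 / 2 : ℝ) • (x - y)) ≤ (G x + G y) / 2 := by
  have h := hG.2.1.2 (mem_univ x) (mem_univ (-y)) (by norm_num : (0 : ℝ) ≤ 1 / 2)
    (by norm_num : (0 : ℝ) ≤ 1 / 2) (by norm_num)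
  rw [← smul_add, ← sub_eq_add_neg, hG.2.2.1] at h
  simp only [smul_eq_mul] at h
  linarith

theorem nonneg (hG : IsGFunction G) (x : Euc N) : 0 ≤ G x := by
  have h := hG.half_sub_le x x
  rw [sub_self, smul_zero, hG.1] at h
  linarith

theorem continuous (hG : IsGFunction G) : Continuous G :=
  continuousOn_univ.1 (hG.2.1.continuousOn isOpen_univ)

theorem smul_le_mul (hG : IsGFunction G) {c : ℝ} (h0 : 0 ≤ c) (h1 : c ≤ 1) (x : Euc N) :
    G (c • x) ≤ c * G x := by
  simpa [hG.1] using hG.2.1.2 (mem_univ x) (mem_univ 0) h0 (sub_nonneg.2 h1) (add_sub_cancel c 1)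

theorem smul_le_self (hG : IsGFunction G) {c : ℝ} (hc : |c| ≤ 1) (x : Euc N) :
    G (c • x) ≤ G x := by
  have key : ∀ y, G (|c| • y) ≤ G y := fun y =>
    (hG.smul_le_mul (abs_nonneg c) hc y).trans (mul_le_of_le_one_left (hG.nonneg y) hc)
  rcases abs_choice c with h | h
  · simpa [h] using key x
  · have := key (-x)
    rwa [h, neg_smul, smul_neg, neg_neg, hG.2.2.1] at this

theorem exists_le_of_norm_le (hG : IsGFunction G) (r : ℝ) :
    ∃ B, 0 ≤ B ∧ ∀ x : Euc N, ‖x‖ ≤ r → G x ≤ B := by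
  obtain ⟨B, hB⟩ := (isCompact_closedBall (0 : Euc N) r).exists_bound_of_continuousOn
    hG.continuous.continuousOn
  exact ⟨max B 0, le_max_right _ _, fun x hx =>
    (Real.le_norm_self _).trans ((hB x (mem_closedBall_zero_iff.2 hx)).trans (le_max_left _ _))⟩

theorem exists_pos_le_of_norm_le (hG : IsGFunction G) {η : ℝ} (hη : 0 < η) :
    ∃ δ, 0 < δ ∧ ∀ x : Euc N, ‖x‖ ≤ δ → G x ≤ η := by
  have h : ∀ᶠ x in 𝓝 (0 : Euc N), G x < η :=
    (hG.continuous.tendsto 0).eventually_lt_const (by rwa [hG.1])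
  obtain ⟨δ, hδ, hball⟩ := Metric.nhds_basis_closedBall.eventually_iff.1 h
  exact ⟨δ, hδ, fun x hx => (hball (mem_closedBall_zero_iff.2 hx)).le⟩

theorem exists_norm_le_add (hG : IsGFunction G) : ∃ R, 0 ≤ R ∧ ∀ x : Euc N, ‖x‖ ≤ R + G x := by
  obtain ⟨R, hR⟩ := hG.2.2.2.1 1
  refine ⟨max R 0, le_max_right _ _, fun x => ?_⟩
  rcases le_or_gt R ‖x‖ with h | h
  · linarith [hR x h, le_max_right R 0]
  · linarith [le_max_left R 0, hG.nonneg x]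

theorem exists_two_smul_le (hG : IsGFunction G) :
    ∃ K B, 0 ≤ K ∧ ∀ x : Euc N, G ((2 : ℝ) • x) ≤ K * G x + B := by
  obtain ⟨K, hK, M, -, hΔ⟩ := hG.2.2.2.2.1
  obtain ⟨B, hB, hball⟩ := hG.exists_le_of_norm_le (2 * M)
  refine ⟨K, B, by linarith, fun x => ?_⟩
  rcases le_or_gt M ‖x‖ with h | h
  · linarith [hΔ x h]
  · have hx : ‖(2 : ℝ) • x‖ ≤ 2 * M := by rw [norm_smul, Real.norm_two]; linarith
    nlinarith [hball _ hx, hG.nonneg x]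

theorem exists_pow_two_smul_le (hG : IsGFunction G) (k : ℕ) :
    ∃ K B, 0 ≤ K ∧ ∀ x : Euc N, G ((2 : ℝ) ^ k • x) ≤ K * G x + B := by
  induction k with
  | zero => exact ⟨1, 0, zero_le_one, fun x => by simp⟩
  | succ k ih =>
    obtain ⟨K, B, hK, h⟩ := ih
    obtain ⟨K₂, B₂, hK₂, h₂⟩ := hG.exists_two_smul_le
    refine ⟨K₂ * K, K₂ * B + B₂, mul_nonneg hK₂ hK, fun x => ?_⟩
    calc G ((2 : ℝ) ^ (k + 1) • x) = G ((2 : ℝ) • (2 : ℝ) ^ k • x) := by rw [pow_succ', mul_smul]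
    _ ≤ K₂ * G ((2 : ℝ) ^ k • x) + B₂ := h₂ _
    _ ≤ K₂ * (K * G x + B) + B₂ := by gcongr; exact h x
    _ = K₂ * K * G x + (K₂ * B + B₂) := by ring

theorem exists_smul_le (hG : IsGFunction G) (c : ℝ) :
    ∃ K B, 0 ≤ K ∧ ∀ x : Euc N, G (c • x) ≤ K * G x + B := by
  obtain ⟨k, hk⟩ := pow_unbounded_of_one_lt |c| one_lt_two
  obtain ⟨K, B, hK, h⟩ := hG.exists_pow_two_smul_le k
  refine ⟨K, B, hK, fun x => ?_⟩
  have hc : |c / 2 ^ k| ≤ 1 := by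
    rw [abs_div, abs_of_pos (by positivity : (0 : ℝ) < 2 ^ k), div_le_one (by positivity)]
    exact hk.le
  calc G (c • x) = G ((c / 2 ^ k) • (2 : ℝ) ^ k • x) := by
        rw [smul_smul, div_mul_cancel₀ _ (by positivity)]
  _ ≤ G ((2 : ℝ) ^ k • x) := hG.smul_le_self hc _
  _ ≤ K * G x + B := h x

end IsGFunction

theorem EssentiallySlower.exists_le_add {N : ℕ} {F G : Euc N → ℝ} (hF : IsGFunction F)
    (hG : IsGFunction G) (hFG : F ≺≺ G) {α : ℝ} (hα : 0 < α) (C : ℝ) :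
    ∃ B, 0 ≤ B ∧ ∀ x, C * F x ≤ G (α • x) + B := by
  obtain ⟨R, hR⟩ := hFG α hα C
  obtain ⟨B, hB, hball⟩ := hF.exists_le_of_norm_le R
  refine ⟨|C| * B, by positivity, fun x => ?_⟩
  rcases le_or_gt R ‖x‖ with h | h
  · linarith [hR x h, mul_nonneg (abs_nonneg C) hB]
  · calc C * F x ≤ |C| * F x := mul_le_mul_of_nonneg_right (le_abs_self C) (hF.nonneg x)
    _ ≤ |C| * B := mul_le_mul_of_nonneg_left (hball x h.le) (abs_nonneg C)
    _ ≤ G (α • x) + |C| * B := le_add_of_nonneg_left (hG.nonneg _)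

section MeasureSpace

variable {X : Type*} [MeasurableSpace X] {μ : Measure X} {N : ℕ}

def CauchyInMeasure {E : Type*} [SeminormedAddCommGroup E] (u : ℕ → X → E) (μ : Measure X) :
    Prop :=
  ∀ ε : ℝ, 0 < ε → ∀ δ : ℝ, 0 < δ → ∃ N₀ : ℕ, ∀ n m : ℕ, N₀ ≤ n → N₀ ≤ m →
    μ {t | ε ≤ ‖u n t - u m t‖} ≤ ENNReal.ofReal δ

/-- Integrability is part of the condition: the Bochner integral of a non-integrable function
is `0`. -/
def InModularUnitBall {E : Type*} (G : E → ℝ) (μ : Measure X) (v : X → E) : Prop :=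
  Integrable (fun t => G (v t)) μ ∧ ∫ t, G (v t) ∂μ ≤ 1

theorem InModularUnitBall.half_sub {G : Euc N → ℝ} (hG : IsGFunction G) {x y : X → Euc N}
    (hxm : AEStronglyMeasurable x μ) (hym : AEStronglyMeasurable y μ)
    (hx : InModularUnitBall G μ x) (hy : InModularUnitBall G μ y) :
    InModularUnitBall G μ ((1 / 2 : ℝ) • (x - y)) := by
  have hint := (hx.1.add hy.1).div_const 2
  have hle : ∀ t, G (((1 / 2 : ℝ) • (x - y)) t) ≤ (G (x t) + G (y t)) / 2 := fun t =>
    hG.half_sub_le (x t) (y t)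
  refine ⟨hint.mono' (hG.continuous.comp_aestronglyMeasurable ((hxm.sub hym).const_smul _))
    (ae_of_all _ fun t => by rw [Real.norm_of_nonneg (hG.nonneg _)]; exact hle t), ?_⟩
  calc ∫ t, G (((1 / 2 : ℝ) • (x - y)) t) ∂μ ≤ ∫ t, (G (x t) + G (y t)) / 2 ∂μ :=
        integral_mono_of_nonneg (ae_of_all _ fun t => hG.nonneg _) hint (ae_of_all _ hle)
  _ = ((∫ t, G (x t) ∂μ) + ∫ t, G (y t) ∂μ) / 2 := by rw [integral_div, integral_add hx.1 hy.1]
  _ ≤ 1 := by linarith [hx.2, hy.2]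

theorem InModularUnitBall.of_tendsto_ae {E : Type*} [TopologicalSpace E] {F : E → ℝ}
    (hFc : Continuous F) (hF0 : ∀ x, 0 ≤ F x) {v : ℕ → X → E} {w : X → E}
    (hv : ∀ k, InModularUnitBall F μ (v k))
    (hlim : ∀ᵐ t ∂μ, Tendsto (fun k => v k t) atTop (𝓝 (w t))) :
    InModularUnitBall F μ w := by
  have hFlim : ∀ᵐ t ∂μ, Tendsto (fun k => F (v k t)) atTop (𝓝 (F (w t))) :=
    hlim.mono fun t ht => (hFc.tendsto _).comp ht
  have hlint : ∫⁻ t, ENNReal.ofReal (F (w t)) ∂μ ≤ 1 := calc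
    ∫⁻ t, ENNReal.ofReal (F (w t)) ∂μ
        = ∫⁻ t, liminf (fun k => ENNReal.ofReal (F (v k t))) atTop ∂μ :=
      lintegral_congr_ae (hFlim.mono fun t ht =>
        ((ENNReal.continuous_ofReal.tendsto _).comp ht).liminf_eq.symm)
    _ ≤ liminf (fun k => ∫⁻ t, ENNReal.ofReal (F (v k t)) ∂μ) atTop :=
      lintegral_liminf_le' fun k => (hv k).1.1.aemeasurable.ennreal_ofReal
    _ ≤ 1 := liminf_le_of_frequently_le' (Frequently.of_forall fun k => by
      rw [← ofReal_integral_eq_lintegral_ofReal (hv k).1 (ae_of_all _ fun t => hF0 _)]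
      exact ENNReal.ofReal_le_one.2 (hv k).2)
  have hmeas : AEStronglyMeasurable (fun t => F (w t)) μ :=
    aestronglyMeasurable_of_tendsto_ae atTop (fun k => (hv k).1.1) hFlim
  refine ⟨⟨hmeas, (hasFiniteIntegral_iff_ofReal (ae_of_all _ fun t => hF0 _)).2
    (hlint.trans_lt ENNReal.one_lt_top)⟩, ?_⟩
  rw [integral_eq_lintegral_of_nonneg_ae (ae_of_all _ fun t => hF0 _) hmeas]
  exact ENNReal.toReal_le_of_le_ofReal zero_le_one (hlint.trans ENNReal.ofReal_one.ge)

theorem IsGFunction.integrable_comp_of_two_smul {F : Euc N → ℝ} (hF : IsGFunction F)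
    {u w : X → Euc N} (hw : AEStronglyMeasurable w μ)
    (hu : Integrable (fun t => F ((2 : ℝ) • u t)) μ)
    (huw : Integrable (fun t => F ((2 : ℝ) • (u t - w t))) μ) :
    Integrable (fun t => F (w t)) μ :=
  ((hu.add huw).div_const 2).mono' (hF.continuous.comp_aestronglyMeasurable hw)
    (ae_of_all _ fun t => by
      rw [Real.norm_of_nonneg (hF.nonneg _)]
      have h := hF.half_sub_le ((2 : ℝ) • u t) ((2 : ℝ) • (u t - w t))
      rwa [show (1 / 2 : ℝ) • ((2 : ℝ) • u t - (2 : ℝ) • (u t - w t)) = w t by module] at h)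

theorem IsGFunction.integral_comp_smul_le {G : Euc N → ℝ} (hG : IsGFunction G) {u : X → Euc N}
    (hint : Integrable (fun t => G (u t)) μ) {c : ℝ} (h0 : 0 ≤ c) (h1 : c ≤ 1) :
    ∫ t, G (c • u t) ∂μ ≤ c * ∫ t, G (u t) ∂μ := by
  rw [← integral_const_mul]
  exact integral_mono_of_nonneg (ae_of_all _ fun t => hG.nonneg _) (hint.const_mul c)
    (ae_of_all _ fun t => hG.smul_le_mul h0 h1 _)

variable [IsFiniteMeasure μ]

theorem IsGFunction.integrable_comp_smul {G : Euc N → ℝ} (hG : IsGFunction G) {u : X → Euc N}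
    (hu : AEStronglyMeasurable u μ) (hint : Integrable (fun t => G (u t)) μ) (c : ℝ) :
    Integrable (fun t => G (c • u t)) μ := by
  obtain ⟨K, B, -, hle⟩ := hG.exists_smul_le c
  exact ((hint.const_mul K).add (integrable_const B)).mono'
    (hG.continuous.comp_aestronglyMeasurable (hu.const_smul c))
    (ae_of_all _ fun t => by rw [Real.norm_of_nonneg (hG.nonneg _)]; exact hle _)

theorem EssentiallySlower.integrable_comp {F G : Euc N → ℝ} (hF : IsGFunction F)
    (hG : IsGFunction G) (hFG : F ≺≺ G) {u : X → Euc N} (hu : AEStronglyMeasurable u μ)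
    (hint : Integrable (fun t => G (u t)) μ) : Integrable (fun t => F (u t)) μ := by
  obtain ⟨B, -, hB⟩ := hFG.exists_le_add hF hG one_pos 1
  exact (hint.add (integrable_const B)).mono' (hF.continuous.comp_aestronglyMeasurable hu)
    (ae_of_all _ fun t => by simpa [Real.norm_of_nonneg (hF.nonneg _)] using hB (u t))

theorem IsGFunction.exists_integral_norm_le {G : Euc N → ℝ} (hG : IsGFunction G) :
    ∃ R, 0 ≤ R ∧ ∀ {v : X → Euc N} {ε : ℝ}, 0 < ε → AEStronglyMeasurable v μ →
      InModularUnitBall G μ (ε⁻¹ • v) →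
      Integrable v μ ∧ ∫ t, ‖v t‖ ∂μ ≤ ε * (R * μ.real univ + 1) := by
  obtain ⟨R, hR, hnorm⟩ := hG.exists_norm_le_add
  refine ⟨R, hR, fun {v ε} hε hv hGv => ?_⟩
  have hle : ∀ t, ‖v t‖ ≤ ε * (R + G ((ε⁻¹ • v) t)) := fun t => calc
    ‖v t‖ = ε * ‖ε⁻¹ • v t‖ := by
      rw [norm_smul, Real.norm_of_nonneg (inv_nonneg.2 hε.le), mul_inv_cancel_left₀ hε.ne']
    _ ≤ ε * (R + G ((ε⁻¹ • v) t)) := mul_le_mul_of_nonneg_left (hnorm _) hε.le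
  have hint : Integrable (fun t => ε * (R + G ((ε⁻¹ • v) t))) μ :=
    ((integrable_const R).add hGv.1).const_mul ε
  have hv1 : Integrable v μ := hint.mono' hv (ae_of_all _ hle)
  refine ⟨hv1, ?_⟩
  calc ∫ t, ‖v t‖ ∂μ ≤ ∫ t, ε * (R + G ((ε⁻¹ • v) t)) ∂μ := integral_mono hv1.norm hint hle
  _ = ε * (R * μ.real univ + ∫ t, G ((ε⁻¹ • v) t) ∂μ) := by
    rw [integral_const_mul, integral_add (integrable_const R) hGv.1, integral_const, smul_eq_mul,
      mul_comm R]
  _ ≤ ε * (R * μ.real univ + 1) := by gcongr; exact hGv.2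

theorem EssentiallySlower.exists_inModularUnitBall_of_measure_le {F G : Euc N → ℝ}
    (hF : IsGFunction F) (hG : IsGFunction G) (hFG : F ≺≺ G) {α : ℝ} (hα : 0 < α) :
    ∃ δ, 0 < δ ∧ ∃ θ, 0 < θ ∧ ∀ v : X → Euc N, AEStronglyMeasurable v μ →
      InModularUnitBall G μ (α • v) → μ {t | δ ≤ ‖v t‖} ≤ ENNReal.ofReal θ →
      InModularUnitBall F μ v := by
  obtain ⟨B, hB, hFB⟩ := hFG.exists_le_add hF hG hα 3
  set η := 1 / (3 * (μ.real univ + 1)) with hη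
  obtain ⟨δ, hδ, hFδ⟩ := hF.exists_pos_le_of_norm_le (η := η) (by positivity)
  refine ⟨δ, hδ, 1 / (B + 1), by positivity, fun v hv hGv hsmall => ?_⟩
  set T := toMeasurable μ {t | δ ≤ ‖v t‖}
  have hT : MeasurableSet T := measurableSet_toMeasurable _ _
  have hsub : {t | δ ≤ ‖v t‖} ⊆ T := subset_toMeasurable _ _
  set g : X → ℝ := fun t => G ((α • v) t) / 3 + T.indicator (fun _ => B / 3) t + η
  have hg : Integrable g μ :=
    ((hGv.1.div_const 3).add ((integrable_const _).indicator hT)).add (integrable_const η)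
  have hFg : ∀ t, F (v t) ≤ g t := fun t => by
    rcases le_or_gt δ ‖v t‖ with h | h
    · simp only [g, Pi.smul_apply, indicator_of_mem (hsub h)]
      linarith [hFB (v t), show (0 : ℝ) ≤ η by positivity]
    · have : 0 ≤ T.indicator (fun _ => B / 3) t := indicator_nonneg (fun _ _ => by positivity) t
      simp only [g, Pi.smul_apply]
      linarith [hFδ (v t) h.le, hG.nonneg (α • v t)]
  have hμT : μ.real T ≤ 1 / (B + 1) := by
    rw [measureReal_def, measure_toMeasurable]
    exact ENNReal.toReal_le_of_le_ofReal (by positivity) hsmall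
  have hgint : ∫ t, g t ∂μ ≤ 1 := by
    have h1 : μ.real T * (B / 3) ≤ 1 / 3 := calc
      μ.real T * (B / 3) ≤ 1 / (B + 1) * (B / 3) := by gcongr
      _ ≤ 1 / 3 := by
        rw [div_mul_div_comm, div_le_div_iff₀ (by positivity) (by norm_num)]; nlinarith
    have h2 : μ.real univ * η ≤ 1 / 3 := by
      rw [hη, mul_one_div, div_le_div_iff₀ (by positivity) (by norm_num)]; nlinarith
    have hGv3 : Integrable (fun t => G ((α • v) t) / 3) μ := hGv.1.div_const 3
    have hTB : Integrable (T.indicator fun _ => B / 3) μ := (integrable_const _).indicator hT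
    rw [integral_add (f := fun t => G ((α • v) t) / 3 + T.indicator (fun _ => B / 3) t)
      (hGv3.add hTB) (integrable_const η), integral_add hGv3 hTB, integral_div,
      integral_indicator_const _ hT, integral_const, smul_eq_mul, smul_eq_mul]
    linarith [hGv.2]
  exact ⟨hg.mono' (hF.continuous.comp_aestronglyMeasurable hv)
    (ae_of_all _ fun t => by rw [Real.norm_of_nonneg (hF.nonneg _)]; exact hFg t),
    (integral_mono_of_nonneg (ae_of_all _ fun t => hF.nonneg _) hg (ae_of_all _ hFg)).trans hgint⟩

theorem EssentiallySlower.exists_inModularUnitBall_sub {F G : Euc N → ℝ} (hF : IsGFunction F)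
    (hG : IsGFunction G) (hFG : F ≺≺ G) {D : ℝ} (hD : 0 < D) {u : ℕ → X → Euc N}
    (hu : ∀ n, AEStronglyMeasurable (u n) μ) (hmod : ∀ n, InModularUnitBall G μ (D⁻¹ • u n))
    (hcm : CauchyInMeasure u μ) {ε : ℝ} (hε : 0 < ε) :
    ∃ N₀ : ℕ, ∀ n m, N₀ ≤ n → N₀ ≤ m → InModularUnitBall F μ (ε⁻¹ • (u n - u m)) := by
  obtain ⟨δ, hδ, θ, hθ, hball⟩ :=
    hFG.exists_inModularUnitBall_of_measure_le (μ := μ) hF hG (α := ε / (2 * D)) (by positivity)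
  obtain ⟨N₀, hN₀⟩ := hcm (ε * δ) (by positivity) θ hθ
  refine ⟨N₀, fun n m hn hm => hball _ (((hu n).sub (hu m)).const_smul _) ?_ ?_⟩
  · have h : (ε / (2 * D)) • ε⁻¹ • (u n - u m) = (1 / 2 : ℝ) • (D⁻¹ • u n - D⁻¹ • u m) := by
      rw [smul_smul, ← smul_sub, smul_smul]
      congr 1
      field_simp
    rw [h]
    exact (hmod n).half_sub hG ((hu n).const_smul _) ((hu m).const_smul _) (hmod m)
  · have h : {t | δ ≤ ‖(ε⁻¹ • (u n - u m)) t‖} = {t | ε * δ ≤ ‖u n t - u m t‖} := by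
      ext t
      simp [norm_smul, abs_of_pos hε, le_inv_mul_iff₀ hε]
    rw [h]
    exact hN₀ n m hn hm

theorem IsGFunction.cauchySeq_toL1 {F : Euc N → ℝ} (hF : IsGFunction F) {u : ℕ → X → Euc N}
    (hu : ∀ n, Integrable (u n) μ)
    (hcauchy : ∀ ε : ℝ, 0 < ε → ∃ N₀ : ℕ, ∀ n m, N₀ ≤ n → N₀ ≤ m →
      InModularUnitBall F μ (ε⁻¹ • (u n - u m))) :
    CauchySeq fun n => (hu n).toL1 (u n) := by
  obtain ⟨R, hR, hL1⟩ := hF.exists_integral_norm_le (μ := μ)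
  rw [Metric.cauchySeq_iff]
  intro ε hε
  have hK : 0 < R * μ.real univ + 1 := by positivity
  obtain ⟨N₀, hN₀⟩ := hcauchy (ε / (2 * (R * μ.real univ + 1))) (by positivity)
  refine ⟨N₀, fun n hn m hm => ?_⟩
  rw [dist_eq_norm, ← Integrable.toL1_sub, L1.norm_of_fun_eq_integral_norm]
  calc ∫ t, ‖(u n - u m) t‖ ∂μ
      ≤ ε / (2 * (R * μ.real univ + 1)) * (R * μ.real univ + 1) :=
        (hL1 (by positivity) ((hu n).sub (hu m)).aestronglyMeasurable (hN₀ n m hn hm)).2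
  _ < ε := by field_simp; linarith

theorem IsGFunction.exists_eventually_inModularUnitBall_sub {F : Euc N → ℝ} (hF : IsGFunction F)
    {u : ℕ → X → Euc N} (hu : ∀ n, Integrable (u n) μ)
    (hcauchy : ∀ ε : ℝ, 0 < ε → ∃ N₀ : ℕ, ∀ n m, N₀ ≤ n → N₀ ≤ m →
      InModularUnitBall F μ (ε⁻¹ • (u n - u m))) :
    ∃ w : X → Euc N, AEStronglyMeasurable w μ ∧
      ∀ ε : ℝ, 0 < ε → ∀ᶠ n in atTop, InModularUnitBall F μ (ε⁻¹ • (u n - w)) := by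
  obtain ⟨L, hL⟩ := cauchySeq_tendsto_of_complete (hF.cauchySeq_toL1 hu hcauchy)
  have hmeas : TendstoInMeasure μ u atTop L :=
    (tendstoInMeasure_of_tendsto_Lp hL).congr (fun n => (hu n).coeFn_toL1) EventuallyEq.rfl
  obtain ⟨ns, hns, hae⟩ := hmeas.exists_seq_tendsto_ae
  refine ⟨L, Lp.aestronglyMeasurable L, fun ε hε => ?_⟩
  obtain ⟨N₀, hN₀⟩ := hcauchy ε hε
  refine eventually_atTop.2 ⟨N₀, fun n hn => ?_⟩
  refine InModularUnitBall.of_tendsto_ae hF.continuous hF.nonneg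
    (v := fun k => ε⁻¹ • (u n - u (ns (k + N₀))))
    (fun k => hN₀ n _ hn ((Nat.le_add_left N₀ k).trans hns.le_apply)) ?_
  filter_upwards [hae] with t ht
  exact (tendsto_const_nhds.sub (ht.comp (tendsto_add_atTop_nat N₀))).const_smul ε⁻¹

end MeasureSpace

theorem cauchyInMeasure_restrict {X E : Type*} [MeasurableSpace X] [SeminormedAddCommGroup E]
    {μ : Measure X} {I : Set X} (hI : NullMeasurableSet I μ) {u : ℕ → X → E}
    (h : ∀ ε : ℝ, 0 < ε → ∀ δ : ℝ, 0 < δ → ∃ N₀ : ℕ, ∀ n m : ℕ, N₀ ≤ n → N₀ ≤ m →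
      μ {t | t ∈ I ∧ ε ≤ ‖u n t - u m t‖} ≤ ENNReal.ofReal δ) :
    CauchyInMeasure u (μ.restrict I) := by
  intro ε hε δ hδ
  obtain ⟨N₀, hN₀⟩ := h ε hε δ hδ
  exact ⟨N₀, fun n m hn hm => by rw [Measure.restrict_apply₀' hI, inter_comm]; exact hN₀ n m hn hm⟩

section LuxemburgNorm

variable {N : ℕ} {I : Set ℝ}

theorem luxNorm_nonneg (F : Euc N → ℝ) (I : Set ℝ) (v : ℝ → Euc N) : 0 ≤ luxNorm F I v :=
  Real.sInf_nonneg fun _ hx => hx.1.le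

theorem luxNorm_le_of_inModularUnitBall {F : Euc N → ℝ} {v : ℝ → Euc N} {ε : ℝ} (hε : 0 < ε)
    (h : InModularUnitBall F (volume.restrict I) (ε⁻¹ • v)) : luxNorm F I v ≤ ε :=
  csInf_le ⟨0, fun _ hx => hx.1.le⟩ ⟨hε, h.2⟩

theorem tendsto_luxNorm_zero {F : Euc N → ℝ} {v : ℕ → ℝ → Euc N}
    (h : ∀ ε : ℝ, 0 < ε → ∀ᶠ n in atTop, InModularUnitBall F (volume.restrict I) (ε⁻¹ • v n)) :
    Tendsto (fun n => luxNorm F I (v n)) atTop (𝓝 0) :=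
  tendsto_order.2 ⟨fun a ha => Eventually.of_forall fun n => ha.trans_le (luxNorm_nonneg F I _),
    fun a ha => (h (a / 2) (by positivity)).mono fun n hn =>
      (luxNorm_le_of_inModularUnitBall (by positivity) hn).trans_lt (by linarith)⟩

theorem IsGFunction.inModularUnitBall_of_luxNorm_lt {G : Euc N → ℝ} (hG : IsGFunction G)
    [IsFiniteMeasure (volume.restrict I)] {u : ℝ → Euc N} (hu : MemLG G I u) {D : ℝ}
    (hD : luxNorm G I u < D) : InModularUnitBall G (volume.restrict I) (D⁻¹ • u) := by
  have hint : ∀ c : ℝ, Integrable (fun t => G (c • u t)) (volume.restrict I) :=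
    hG.integrable_comp_smul hu.1 hu.2
  have hne : {α : ℝ | 0 < α ∧ ∫ t in I, G (α⁻¹ • u t) ≤ 1}.Nonempty := by
    have h0 : 0 ≤ ∫ t in I, G (u t) := integral_nonneg fun t => hG.nonneg _
    refine ⟨(∫ t in I, G (u t)) + 1, by linarith, ?_⟩
    refine (hG.integral_comp_smul_le hu.2 (by positivity)
      (inv_le_one_of_one_le₀ (by linarith))).trans ?_
    rw [inv_mul_le_iff₀ (by linarith)]
    linarith
  obtain ⟨β, ⟨hβ, hβ1⟩, hβD⟩ := (csInf_lt_iff ⟨0, fun _ h => h.1.le⟩ hne).1 hD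
  have hD0 : 0 < D := hβ.trans hβD
  have hβD1 : β / D ≤ 1 := div_le_one_of_le₀ hβD.le hD0.le
  have h : ∀ t, (D⁻¹ • u) t = (β / D) • β⁻¹ • u t := fun t => by
    rw [smul_smul, Pi.smul_apply]
    congr 1
    field_simp
  refine ⟨hint D⁻¹, ?_⟩
  simp only [h]
  calc ∫ t in I, G ((β / D) • β⁻¹ • u t) ≤ β / D * ∫ t in I, G (β⁻¹ • u t) :=
        hG.integral_comp_smul_le (hint _) (by positivity) hβD1
  _ ≤ 1 := mul_le_one₀ hβD1 (integral_nonneg fun t => hG.nonneg _) hβ1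

end LuxemburgNorm

theorem compact_embedding_sequence_general {N : ℕ} (F G : Euc N → ℝ)
    (hF : IsGFunction F) (hG : IsGFunction G)
    (hFG : ∀ α : ℝ, 0 < α → ∀ C : ℝ, ∃ R : ℝ, ∀ x : Euc N, R ≤ ‖x‖ →
      C * F x ≤ G (α • x))
    (I : Set ℝ) (a b : ℝ) (hI1 : Ioo a b ⊆ I) (hI2 : I ⊆ Icc a b)
    (u : ℕ → ℝ → Euc N) (hu : ∀ n, MemLG G I (u n))
    (C : ℝ) (hbd : ∀ n, luxNorm G I (u n) ≤ C)
    (hmeas : ∀ ε : ℝ, 0 < ε → ∀ δ : ℝ, 0 < δ → ∃ N₀ : ℕ,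
      ∀ n m : ℕ, N₀ ≤ n → N₀ ≤ m →
        volume {t | t ∈ I ∧ ε ≤ ‖u n t - u m t‖} ≤ ENNReal.ofReal δ) :
    (∀ ε : ℝ, 0 < ε → ∃ N₀ : ℕ, ∀ n m : ℕ, N₀ ≤ n → N₀ ≤ m →
        luxNorm F I (fun t => u n t - u m t) ≤ ε) ∧
    ∃ w : ℝ → Euc N, MemLG F I w ∧
      Tendsto (fun n => luxNorm F I (fun t => u n t - w t)) atTop (nhds 0) := by
  have : IsFiniteMeasure (volume.restrict I) :=
    isFiniteMeasure_restrict.2 ((measure_mono hI2).trans_lt measure_Icc_lt_top).ne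
  have hI : NullMeasurableSet I := measurableSet_Ioo.nullMeasurableSet.congr
    (hI1.eventuallyLE.antisymm (hI2.eventuallyLE.trans Ioo_ae_eq_Icc.symm.le))
  have hD : 0 < C + 1 := by linarith [luxNorm_nonneg G I (u 0), hbd 0]
  have hmod : ∀ n, InModularUnitBall G (volume.restrict I) ((C + 1)⁻¹ • u n) := fun n =>
    hG.inModularUnitBall_of_luxNorm_lt (hu n) ((hbd n).trans_lt (lt_add_one C))
  have hcauchy := fun ε (hε : 0 < ε) => EssentiallySlower.exists_inModularUnitBall_sub hF hG hFG
    hD (fun n => (hu n).1) hmod (cauchyInMeasure_restrict hI hmeas) hε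
  obtain ⟨R, -, hL1⟩ := hG.exists_integral_norm_le (μ := volume.restrict I)
  obtain ⟨w, hw, hlim⟩ := hF.exists_eventually_inModularUnitBall_sub
    (fun n => (hL1 hD (hu n).1 (hmod n)).1) hcauchy
  refine ⟨fun ε hε => ?_, w, ⟨hw, ?_⟩, tendsto_luxNorm_zero hlim⟩
  · obtain ⟨N₀, hN₀⟩ := hcauchy ε hε
    exact ⟨N₀, fun n m hn hm => luxNorm_le_of_inModularUnitBall hε (hN₀ n m hn hm)⟩
  · obtain ⟨n, hn⟩ := (hlim 2⁻¹ (by norm_num)).exists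
    refine hF.integrable_comp_of_two_smul hw ?_
      (by simpa only [inv_inv, Pi.smul_apply, Pi.sub_apply] using hn.1)
    exact EssentiallySlower.integrable_comp hF hG hFG ((hu n).1.const_smul (2 : ℝ))
      (hG.integrable_comp_smul (hu n).1 (hu n).2 2)

/-- If F ≺≺ G, a norm-bounded sequence in L^G which is Cauchy in
measure is Cauchy in the L^F norm and converges in L^F. -/
theorem compact_embedding_sequence {N : ℕ} (hN : 1 ≤ N) (F G : Euc N → ℝ)
    (hF : IsGFunction F) (hG : IsGFunction G)
    (hFG : ∀ α : ℝ, 0 < α → ∀ C : ℝ, ∃ R : ℝ, ∀ x : Euc N, R ≤ ‖x‖ →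
      C * F x ≤ G (α • x))
    (I : Set ℝ) (a b : ℝ) (hab : a < b) (hI1 : Ioo a b ⊆ I) (hI2 : I ⊆ Icc a b)
    (u : ℕ → ℝ → Euc N) (hu : ∀ n, MemLG G I (u n))
    (C : ℝ) (hC : 0 < C) (hbd : ∀ n, luxNorm G I (u n) ≤ C)
    (hmeas : ∀ ε : ℝ, 0 < ε → ∀ δ : ℝ, 0 < δ → ∃ N₀ : ℕ,
      ∀ n m : ℕ, N₀ ≤ n → N₀ ≤ m →
        volume {t | t ∈ I ∧ ε ≤ ‖u n t - u m t‖} ≤ ENNReal.ofReal δ) :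
    (∀ ε : ℝ, 0 < ε → ∃ N₀ : ℕ, ∀ n m : ℕ, N₀ ≤ n → N₀ ≤ m →
        luxNorm F I (fun t => u n t - u m t) ≤ ε) ∧
    ∃ w : ℝ → Euc N, MemLG F I w ∧
      Tendsto (fun n => luxNorm F I (fun t => u n t - w t)) atTop (nhds 0) :=
  compact_embedding_sequence_general F G hF hG hFG I a b hI1 hI2 u hu C hbd hmeas

end
end

section
/- (Poincaré inequality) Let G : ℝ^N → ℝ be an admissible G-function and I = [a,b] a compact nondegenerate interval. Let u : I → ℝ^N be absolutely continuous with u(t) = u(a) + ∫_a^t u̇(s) ds for all t ∈ I, where u̇ ∈ L^G(I,ℝ^N), and suppose u(a) = u(b) = 0. Then ‖u‖_G ≤ (b − a) ‖u̇‖_G. -/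
open MeasureTheory Filter Set

noncomputable section

open scoped ENNReal

/-!
Since `u a = 0`, the vector `((b - a) * α)⁻¹ • u t` is the average over `[a, b]` of
`α⁻¹ • du` restricted to `[a, t]`, so Jensen's inequality bounds `G` of it by the average of
`G (α⁻¹ • du)` over `[a, b]`. Integrating in `t`, every `α` admissible in the Luxemburg infimum
for `du` makes `(b - a) * α` admissible for `u`. The Δ₂ condition makes every dilate
`G (c • du)` integrable, so the modulars involved are genuine integrals rather than junk zeros.
-/

section ConvexEven

variable {E : Type*} [AddCommGroup E] [Module ℝ E] {G : E → ℝ}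

theorem ConvexOn.nonneg_of_even (hconv : ConvexOn ℝ univ G) (h0 : G 0 = 0)
    (heven : ∀ x, G (-x) = G x) (x : E) : 0 ≤ G x := by
  have h := hconv.2 (mem_univ x) (mem_univ (-x)) (by norm_num : (0 : ℝ) ≤ 1 / 2)
    (by norm_num : (0 : ℝ) ≤ 1 / 2) (by norm_num)
  rw [smul_neg, add_neg_cancel, h0, heven, smul_eq_mul] at h
  linarith

theorem ConvexOn.map_smul_le_mul (hconv : ConvexOn ℝ univ G) (h0 : G 0 = 0) {c : ℝ}
    (hc₀ : 0 ≤ c) (hc₁ : c ≤ 1) (x : E) : G (c • x) ≤ c * G x := by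
  simpa [h0] using
    hconv.2 (mem_univ x) (mem_univ 0) hc₀ (sub_nonneg.2 hc₁) (add_sub_cancel c 1)

theorem ConvexOn.map_smul_le_of_abs_le (hconv : ConvexOn ℝ univ G) (h0 : G 0 = 0)
    (heven : ∀ x, G (-x) = G x) {c d : ℝ} (hcd : |c| ≤ d) (x : E) :
    G (c • x) ≤ G (d • x) := by
  have habs : G (c • x) = G (|c| • x) := by
    rcases abs_choice c with h | h <;> rw [h]
    rw [neg_smul, heven]
  rcases ((abs_nonneg c).trans hcd).eq_or_lt with rfl | hd
  · rw [abs_nonpos_iff.1 hcd]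
  have hcd' : |c| / d ≤ 1 := (div_le_one hd).2 hcd
  calc G (c • x) = G ((|c| / d) • d • x) := by rw [habs, smul_smul, div_mul_cancel₀ _ hd.ne']
    _ ≤ (|c| / d) * G (d • x) := hconv.map_smul_le_mul h0 (by positivity) hcd' _
    _ ≤ G (d • x) := mul_le_of_le_one_left (hconv.nonneg_of_even h0 heven _) hcd'

end ConvexEven

theorem exists_map_two_smul_le_add {E : Type*} [NormedAddCommGroup E] [NormedSpace ℝ E]
    [ProperSpace E] {G : E → ℝ} (hcont : Continuous G) (hnn : ∀ x, 0 ≤ G x) {K M : ℝ}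
    (hK : 0 ≤ K) (hΔ₂ : ∀ x, M ≤ ‖x‖ → G ((2 : ℝ) • x) ≤ K * G x) :
    ∃ C, ∀ x, G ((2 : ℝ) • x) ≤ K * G x + C := by
  obtain ⟨C, hC⟩ := (isCompact_closedBall (0 : E) M).bddAbove_image
    (hcont.comp (continuous_const_smul (2 : ℝ))).continuousOn
  refine ⟨max C 0, fun x => ?_⟩
  have hKx : 0 ≤ K * G x := mul_nonneg hK (hnn x)
  rcases le_or_gt M ‖x‖ with hx | hx
  · linarith [hΔ₂ x hx, le_max_right C 0]
  · have h2x : G ((2 : ℝ) • x) ≤ C := hC ⟨x, mem_closedBall_zero_iff.2 hx.le, rfl⟩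
    linarith [le_max_left C 0]

section Integrability

variable {α E : Type*} [MeasurableSpace α] {μ : Measure α} [IsFiniteMeasure μ]
  [NormedAddCommGroup E] [NormedSpace ℝ E] {G : E → ℝ} {f : α → E}

theorem MeasureTheory.Integrable.comp_two_smul_of_le_add (hcont : Continuous G) (hnn : ∀ x, 0 ≤ G x)
    {K C : ℝ} (hΔ₂ : ∀ x, G ((2 : ℝ) • x) ≤ K * G x + C) (hf : AEStronglyMeasurable f μ)
    (hGf : Integrable (fun t => G (f t)) μ) : Integrable (fun t => G ((2 : ℝ) • f t)) μ :=
  ((hGf.const_mul K).add (integrable_const C)).mono'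
    (hcont.comp_aestronglyMeasurable (hf.const_smul 2))
    (Eventually.of_forall fun t => by rw [Real.norm_of_nonneg (hnn _)]; exact hΔ₂ _)

theorem MeasureTheory.Integrable.comp_smul_of_two_smul_le_add (hGf : Integrable (fun t => G (f t)) μ)
    (hconv : ConvexOn ℝ univ G) (hcont : Continuous G) (h0 : G 0 = 0)
    (heven : ∀ x, G (-x) = G x) {K C : ℝ} (hΔ₂ : ∀ x, G ((2 : ℝ) • x) ≤ K * G x + C)
    (hf : AEStronglyMeasurable f μ) (c : ℝ) : Integrable (fun t => G (c • f t)) μ := by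
  have hnn := hconv.nonneg_of_even h0 heven
  have hpow (n : ℕ) : Integrable (fun t => G ((2 : ℝ) ^ n • f t)) μ := by
    induction n with
    | zero => simpa using hGf
    | succ n ih =>
      simpa [pow_succ', mul_smul] using
        ih.comp_two_smul_of_le_add hcont hnn hΔ₂ (hf.const_smul _)
  obtain ⟨n, hn⟩ := pow_unbounded_of_one_lt |c| one_lt_two
  exact (hpow n).mono' (hcont.comp_aestronglyMeasurable (hf.const_smul c))
    (Eventually.of_forall fun t => by
      rw [Real.norm_of_nonneg (hnn _)]; exact hconv.map_smul_le_of_abs_le h0 heven hn.le _)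

end Integrability

theorem exists_integral_inv_smul_le_one {α E : Type*} [MeasurableSpace α] {μ : Measure α}
    [AddCommGroup E] [Module ℝ E] {G : E → ℝ} (hconv : ConvexOn ℝ univ G) (h0 : G 0 = 0)
    (hnn : ∀ x, 0 ≤ G x) {f : α → E} (hGf : Integrable (fun t => G (f t)) μ) :
    ∃ c : ℝ, 0 < c ∧ ∫ t, G (c⁻¹ • f t) ∂μ ≤ 1 := by
  set m := ∫ t, G (f t) ∂μ
  have hm : 0 ≤ m := integral_nonneg fun t => hnn _
  refine ⟨m + 1, by linarith, ?_⟩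
  have hc : (m + 1)⁻¹ ≤ 1 := inv_le_one_of_one_le₀ (by linarith)
  calc ∫ t, G ((m + 1)⁻¹ • f t) ∂μ ≤ ∫ t, (m + 1)⁻¹ * G (f t) ∂μ :=
        integral_mono_of_nonneg (Eventually.of_forall fun _ => hnn _) (hGf.const_mul _)
          (Eventually.of_forall fun t => hconv.map_smul_le_mul h0 (by positivity) hc _)
    _ = (m + 1)⁻¹ * m := integral_const_mul _ _
    _ ≤ 1 := by rw [inv_mul_le_iff₀ (by linarith)]; linarith

section Jensen

variable {E : Type*} [NormedAddCommGroup E] [NormedSpace ℝ E] [CompleteSpace E] {G : E → ℝ}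

theorem ConvexOn.map_smul_setIntegral_le {α : Type*} [MeasurableSpace α] {μ : Measure α}
    (hconv : ConvexOn ℝ univ G) (hcont : Continuous G) (h0 : G 0 = 0) (hnn : ∀ x, 0 ≤ G x)
    {s I : Set α} (hs : MeasurableSet s) (hsI : s ⊆ I) (hI₀ : μ I ≠ 0) (hI : μ I ≠ ∞)
    {f : α → E} (hf : IntegrableOn f I μ) (hGf : IntegrableOn (fun t => G (f t)) I μ) :
    G ((μ.real I)⁻¹ • ∫ t in s, f t ∂μ) ≤ (μ.real I)⁻¹ * ∫ t in I, G (f t) ∂μ := by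
  have hGind : (fun t => G (s.indicator f t)) = s.indicator (fun t => G (f t)) := by
    ext t; by_cases ht : t ∈ s <;> simp [ht, h0]
  have hJ := hconv.map_set_average_le hcont.continuousOn isClosed_univ hI₀ hI
    (Eventually.of_forall fun _ => mem_univ _) (hf.indicator hs)
    (by rw [Function.comp_def, hGind]; exact hGf.indicator hs)
  rw [setAverage_eq, setAverage_eq, hGind, setIntegral_indicator hs,
    setIntegral_indicator hs, inter_eq_self_of_subset_right hsI, smul_eq_mul] at hJ
  exact hJ.trans (mul_le_mul_of_nonneg_left
    (setIntegral_mono_set hGf (Eventually.of_forall fun _ => hnn _) hsI.eventuallyLE)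
    (by positivity))

theorem setIntegral_comp_smul_primitive_le (hconv : ConvexOn ℝ univ G) (hcont : Continuous G)
    (h0 : G 0 = 0) (hnn : ∀ x, 0 ≤ G x) {a b : ℝ} (hab : a < b) {v : ℝ → E}
    (hv : IntegrableOn v (Icc a b)) (hGv : IntegrableOn (fun t => G (v t)) (Icc a b)) :
    ∫ t in Icc a b, G ((b - a)⁻¹ • ∫ s in a..t, v s) ≤ ∫ t in Icc a b, G (v t) := by
  have hvol : volume.real (Icc a b) = b - a := by simp [hab.le]
  have hpt : ∀ t ∈ Icc a b,
      G ((b - a)⁻¹ • ∫ s in a..t, v s) ≤ (b - a)⁻¹ * ∫ t in Icc a b, G (v t) := by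
    intro t ht
    rw [intervalIntegral.integral_of_le ht.1, ← hvol]
    exact hconv.map_smul_setIntegral_le hcont h0 hnn measurableSet_Ioc
      (Ioc_subset_Icc_self.trans (Icc_subset_Icc_right ht.2)) (by simp [hab]) (by simp) hv hGv
  calc _ ≤ ∫ _ in Icc a b, (b - a)⁻¹ * ∫ t in Icc a b, G (v t) :=
        integral_mono_of_nonneg (Eventually.of_forall fun _ => hnn _)
          (integrableOn_const (by simp))
          ((ae_restrict_iff' measurableSet_Icc).2 (Eventually.of_forall hpt))
    _ = _ := by
      rw [setIntegral_const, hvol, smul_eq_mul]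
      field_simp [(sub_pos.2 hab).ne']

end Jensen

theorem luxNorm_le_mul_of_forall_le {N : ℕ} {G : Euc N → ℝ} {I : Set ℝ} {u v : ℝ → Euc N}
    {c : ℝ} (hc : 0 < c) (hv : ∃ α : ℝ, 0 < α ∧ ∫ t in I, G (α⁻¹ • v t) ≤ 1)
    (huv : ∀ α : ℝ, 0 < α → ∫ t in I, G ((c * α)⁻¹ • u t) ≤ ∫ t in I, G (α⁻¹ • v t)) :
    luxNorm G I u ≤ c * luxNorm G I v := by
  rw [luxNorm, luxNorm, ← smul_eq_mul, ← Real.sInf_smul_of_nonneg hc.le]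
  obtain ⟨α, hα, hαv⟩ := hv
  refine csInf_le_csInf ⟨0, fun β hβ => hβ.1.le⟩ ⟨c • α, smul_mem_smul_set ⟨hα, hαv⟩⟩ ?_
  rintro _ ⟨β, ⟨hβ, hβv⟩, rfl⟩
  exact ⟨mul_pos hc hβ, (huv β hβ).trans hβv⟩

theorem poincare_inequality_general {N : ℕ} (G : Euc N → ℝ) (hG : IsGFunction G)
    (a b : ℝ) (hab : a < b) (u du : ℝ → Euc N)
    (hdu : MemLG G (Icc a b) du) (hint : IntegrableOn du (Icc a b))
    (hu : ∀ t ∈ Icc a b, u t = u a + ∫ s in a..t, du s)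
    (hua : u a = 0) :
    luxNorm G (Icc a b) u ≤ (b - a) * luxNorm G (Icc a b) du := by
  obtain ⟨hG0, hconv, heven, -, ⟨K, hK, M, -, hΔ₂⟩, -⟩ := hG
  have hcont : Continuous G := continuousOn_univ.1 (hconv.continuousOn isOpen_univ)
  have hnn := hconv.nonneg_of_even hG0 heven
  obtain ⟨C, hC⟩ := exists_map_two_smul_le_add hcont hnn (by linarith) hΔ₂
  have hscale (c : ℝ) : IntegrableOn (fun t => G (c • du t)) (Icc a b) :=
    hdu.2.comp_smul_of_two_smul_le_add hconv hcont hG0 heven hC hdu.1 c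
  refine luxNorm_le_mul_of_forall_le (sub_pos.2 hab)
    (exists_integral_inv_smul_le_one hconv hG0 hnn hdu.2) fun α _ => ?_
  calc ∫ t in Icc a b, G (((b - a) * α)⁻¹ • u t)
      = ∫ t in Icc a b, G ((b - a)⁻¹ • ∫ s in a..t, α⁻¹ • du s) :=
        setIntegral_congr_fun measurableSet_Icc fun t ht => by
          rw [hu t ht, hua, zero_add, intervalIntegral.integral_smul, mul_inv, mul_smul]
    _ ≤ ∫ t in Icc a b, G (α⁻¹ • du t) :=
      setIntegral_comp_smul_primitive_le hconv hcont hG0 hnn hab (hint.smul α⁻¹) (hscale α⁻¹)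

/-- Poincaré inequality ‖u‖_G ≤ (b − a) ‖u̇‖_G for u vanishing at the
endpoints. -/
theorem poincare_inequality {N : ℕ} (hN : 1 ≤ N) (G : Euc N → ℝ) (hG : IsGFunction G)
    (a b : ℝ) (hab : a < b) (u du : ℝ → Euc N)
    (hdu : MemLG G (Icc a b) du) (hint : IntegrableOn du (Icc a b))
    (hu : ∀ t ∈ Icc a b, u t = u a + ∫ s in a..t, du s)
    (hua : u a = 0) (hub : u b = 0) :
    luxNorm G (Icc a b) u ≤ (b - a) * luxNorm G (Icc a b) du :=
  poincare_inequality_general G hG a b hab u du hdu hint hu hua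

end
end
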